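/- (Total-minor Polynomial) Let G be an oriented hypergraph with incidence matrix H and Laplacian L = H·Hᵀ, and let X be the V×V matrix of indeterminates x_{v,w}. Then det(X − L) = Σ_{(U,φ)} ( Σ_{c} csgn(c) ) · Π_{u∈U} x_{u,φ(u)}, where the outer sum runs over all subsets U ⊆ V together with all injections φ: U → V, and the inner sum runs over all nonzero reduced [u,w]-contributors c of G for the injection φ. -/

import Mathlib

open Matrix
open scoped Classical

noncomputable section

/-- An oriented hypergraph `G = (V, E, I, ς, ω, σ)`: `vtx = ς` assigns each incidence
its vertex, `edg = ω` assigns each incidence its edge, and `sgn = σ` is its sign. -/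
structure OHG (V E I : Type*) where
  vtx : I → V
  edg : I → E
  sgn : I → ℤˣ

variable {V E I : Type*} [Fintype V] [DecidableEq V] [Fintype E] [DecidableEq E]
  [Fintype I] [DecidableEq I]

/-- A (nonzero) reduced `[u,w]`-contributor for the injection `φ : U → V` with image
`W`: a map `c : V∖U → I × I` whose tails sit at their vertices, whose tail and head
share an edge, and whose head map is a bijection from `V∖U` onto `V∖W`. -/
def IsRedCont (G : OHG V E I) (U : Finset V) (φ : {v : V // v ∈ U} ↪ V)
    (c : {v : V // v ∉ U} → I × I) : Prop :=
  (∀ v, G.vtx (c v).1 = v.1) ∧ (∀ v, G.edg (c v).1 = G.edg (c v).2) ∧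
    Set.BijOn (fun v : {v : V // v ∉ U} => G.vtx (c v).2) Set.univ
      {w : V | w ∉ Set.range φ}

/-- The completion `č` of a reduced contributor: the self-map of `V` agreeing with the
head map of `c` on `V∖U` and with `φ` on `U`. -/
def compFun (G : OHG V E I) (U : Finset V) (φ : {v : V // v ∈ U} ↪ V)
    (c : {v : V // v ∉ U} → I × I) : V → V :=
  fun v => if h : v ∈ U then φ ⟨v, h⟩ else G.vtx (c ⟨v, h⟩).2

/-- The orbit of `v` under iteration of `f` (for `f` a bijection of a finite type this
is the full cycle of `v`). -/
def orbitOf (f : V → V) (v : V) : Finset V :=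
  Finset.univ.filter fun w => ∃ n : ℕ, f^[n] v = w

/-- The set of orbits of `f`. -/
def orbitsOf (f : V → V) : Finset (Finset V) :=
  Finset.univ.image (orbitOf f)

/-- `ec č`: the number of even cycles of the completion of a reduced contributor. -/
def ecR (G : OHG V E I) (U : Finset V) (φ : {v : V // v ∈ U} ↪ V)
    (c : {v : V // v ∉ U} → I × I) : ℕ :=
  ((orbitsOf (compFun G U φ c)).filter fun O => Even O.card).card

/-- `bs c`: the number of backsteps of a reduced contributor. -/
def bsR (U : Finset V) (c : {v : V // v ∉ U} → I × I) : ℕ :=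
  (Finset.univ.filter fun v : {v : V // v ∉ U} => (c v).1 = (c v).2).card

/-- The arc relation of the digraph on `V` with an arc `v → ς (h_v)` for each
`v ∈ V∖U`. -/
def arcRel (G : OHG V E I) (U : Finset V) (c : {v : V // v ∉ U} → I × I) :
    V → V → Prop :=
  fun a b => ∃ v : {v : V // v ∉ U}, v.1 = a ∧ G.vtx (c v).2 = b

/-- The connected component of `v` in the digraph of a reduced contributor. -/
def compOf (G : OHG V E I) (U : Finset V) (c : {v : V // v ∉ U} → I × I) (v : V) :
    Finset V :=
  Finset.univ.filter fun w => Relation.EqvGen (arcRel G U c) v w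

/-- The components of a reduced contributor. -/
def compsOf (G : OHG V E I) (U : Finset V) (c : {v : V // v ∉ U} → I × I) :
    Finset (Finset V) :=
  Finset.univ.image (compOf G U c)

/-- A negative component: not a single backstep, and the product of the adjacency
signs `-σ(t_v)·σ(h_v)` over the arcs it contains is `-1`. -/
def NegComp (G : OHG V E I) (U : Finset V) (c : {v : V // v ∉ U} → I × I)
    (O : Finset V) : Prop :=
  (¬ ∃ v : {v : V // v ∉ U}, O = {v.1} ∧ (c v).1 = (c v).2) ∧
    ∏ v ∈ Finset.univ.filter (fun v : {v : V // v ∉ U} => v.1 ∈ O),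
      (-(G.sgn (c v).1 * G.sgn (c v).2)) = (-1 : ℤˣ)

/-- `nc c`: the number of negative components of a reduced contributor. -/
def ncR (G : OHG V E I) (U : Finset V) (c : {v : V // v ∉ U} → I × I) : ℕ :=
  ((compsOf G U c).filter (NegComp G U c)).card

/-- The sign `csgn c = (-1) ^ (ec č + nc c + bs c)` of a reduced contributor. -/
def csgnR (G : OHG V E I) (U : Finset V) (φ : {v : V // v ∈ U} ↪ V)
    (c : {v : V // v ∉ U} → I × I) : ℤ :=
  (-1) ^ (ecR G U φ c + ncR G U c + bsR U c)

/-- A reduced contributor is edge-monic when its tail edges are pairwise distinct. -/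
def EdgeMonicR (G : OHG V E I) (U : Finset V) (c : {v : V // v ∉ U} → I × I) : Prop :=
  Function.Injective fun v : {v : V // v ∉ U} => G.edg (c v).1

/-- The incidence matrix of an oriented hypergraph. -/
def incM (G : OHG V E I) : Matrix V E ℤ :=
  Matrix.of fun v e =>
    ∑ i ∈ Finset.univ.filter (fun i => G.vtx i = v ∧ G.edg i = e), (G.sgn i : ℤ)

/-- The Laplacian `L = H Hᵀ` of an oriented hypergraph. -/
def lapM (G : OHG V E I) : Matrix V V ℤ :=
  incM G * (incM G)ᵀ

/-!
Transposing and expanding `det (X - L)` by the Leibniz formula, each factor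
`x_{v,σv} - L_{v,σv}` is split into its two summands; choosing the set `U` of vertices where
the indeterminate is taken and grouping the permutations `σ` by their restriction `φ` to `U`,
the coefficient of `∏ x_{u,φu}` is `Σ_σ sgn σ ∏_{v ∉ U} (-L_{v,σv})`. Since
`L_{v,w} = Σ σ(t) σ(h)` over incidence pairs `(t, h)` from `v` to `w` through a common edge,
each term of this product is a choice of such pairs, that is, a reduced contributor `c` whose
completion is `σ`. Finally `sgn σ = (-1) ^ ec(σ)`, and the product of the arc signs
`-σ(t) σ(h)` splits over the components of `c`: every negative component and every backstep
contributes `-1` and every other component `+1`, which gives `csgn c`.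
-/

open Finset Equiv

section EvenOrbits

theorem prod_map_neg_neg_one_pow (m : Multiset ℕ) :
    (m.map fun n => -(-1 : ℤˣ) ^ n).prod = (-1) ^ Multiset.card (m.filter Even) := by
  induction m using Multiset.induction_on with
  | empty => simp
  | cons a s ih =>
    rcases Nat.even_or_odd a with h | h <;>
      simp [h, ih, pow_succ, h.neg_one_pow, Nat.not_even_iff_odd.mpr]

theorem orbitOf_eq_filter_sameCycle (f : Perm V) (v : V) :
    orbitOf f v = univ.filter (f.SameCycle v) := by
  ext w
  simp only [orbitOf, mem_filter, mem_univ, true_and, ← Perm.coe_pow]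
  exact ⟨fun ⟨n, hn⟩ => ⟨n, by simpa⟩, fun h => h.exists_pow_eq'.imp fun _ h => h.2⟩

theorem orbitOf_eq_singleton {f : Perm V} {v : V} (hv : f v = v) : orbitOf f v = {v} := by
  ext w
  simp only [orbitOf_eq_filter_sameCycle, mem_filter, mem_univ, true_and, mem_singleton]
  exact ⟨fun h => (h.eq_of_left hv).symm, fun h => h ▸ Perm.SameCycle.refl f v⟩

theorem orbitOf_eq_support_cycleOf {f : Perm V} {v : V} (hv : f v ≠ v) :
    orbitOf f v = (f.cycleOf v).support := by
  ext w
  simp [orbitOf_eq_filter_sameCycle, Perm.mem_support_cycleOf_iff' hv]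

theorem support_injOn_cycleFactorsFinset (f : Perm V) :
    Set.InjOn Perm.support (f.cycleFactorsFinset : Set (Perm V)) := by
  intro g hg g' hg' h
  rw [mem_coe, Perm.mem_cycleFactorsFinset_iff] at hg hg'
  ext v
  by_cases hv : v ∈ g.support
  · rw [hg.2 v hv, hg'.2 v (h ▸ hv)]
  · rw [Perm.notMem_support.mp hv, Perm.notMem_support.mp (h ▸ hv)]

theorem filter_even_card_orbitsOf (f : Perm V) :
    (orbitsOf f).filter (fun O => Even O.card)
      = (f.cycleFactorsFinset.filter fun g => Even g.support.card).image Perm.support := by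
  ext O
  simp only [orbitsOf, mem_filter, mem_image, mem_univ, true_and]
  constructor
  · rintro ⟨⟨v, rfl⟩, hev⟩
    by_cases hv : f v = v
    · simp [orbitOf_eq_singleton hv] at hev
    · rw [orbitOf_eq_support_cycleOf hv] at hev ⊢
      exact ⟨_, ⟨Perm.cycleOf_mem_cycleFactorsFinset_iff.mpr (Perm.mem_support.mpr hv), hev⟩,
        rfl⟩
  · rintro ⟨g, ⟨hg, hev⟩, rfl⟩
    obtain ⟨hcycle, hagree⟩ := Perm.mem_cycleFactorsFinset_iff.mp hg
    obtain ⟨v, hv⟩ := hcycle.nonempty_support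
    have hfv : f v ≠ v := hagree v hv ▸ Perm.mem_support.mp hv
    refine ⟨⟨v, ?_⟩, hev⟩
    rw [orbitOf_eq_support_cycleOf hfv, ← Perm.cycle_is_cycleOf hv hg]

theorem sign_eq_neg_one_pow_card_even_orbitsOf (f : Perm V) :
    Perm.sign f = (-1) ^ ((orbitsOf f).filter fun O => Even O.card).card := by
  rw [Perm.sign_of_cycleType', prod_map_neg_neg_one_pow, filter_even_card_orbitsOf,
    card_image_of_injOn ((support_injOn_cycleFactorsFinset f).mono (filter_subset _ _)),
    Perm.cycleType_def, Multiset.filter_map, Multiset.card_map]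
  rfl

end EvenOrbits

section Components

omit [Fintype E] [DecidableEq E] [Fintype I] [DecidableEq I]

variable (G : OHG V E I) {U : Finset V} (c : {v : V // v ∉ U} → I × I)

def arcSign (v : {v : V // v ∉ U}) : ℤˣ :=
  -(G.sgn (c v).1 * G.sgn (c v).2)

def IsBackstepComp (O : Finset V) : Prop :=
  ∃ v : {v : V // v ∉ U}, O = {v.1} ∧ (c v).1 = (c v).2

omit [DecidableEq V] in
theorem mem_compOf_iff_compOf_eq {v w : V} :
    w ∈ compOf G U c v ↔ compOf G U c v = compOf G U c w := by
  refine ⟨fun h => ?_, fun h => ?_⟩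
  · ext x
    simp only [compOf, mem_filter, mem_univ, true_and] at h ⊢
    exact ⟨fun hx => (h.symm _ _).trans _ _ _ hx, h.trans _ _ _⟩
  · rw [h]
    simpa [compOf] using Relation.EqvGen.refl w

theorem prod_eq_prod_compsOf {M : Type*} [CommMonoid M] (f : {v : V // v ∉ U} → M) :
    ∏ v, f v = ∏ O ∈ compsOf G U c,
      ∏ v ∈ univ.filter (fun v : {v : V // v ∉ U} => v.1 ∈ O), f v := by
  rw [← prod_fiberwise_of_maps_to (g := fun v => compOf G U c v.1)
    (fun v _ => mem_image_of_mem _ (mem_univ _))]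
  refine prod_congr rfl fun O hO => prod_congr (filter_congr fun v _ => ?_) fun _ _ => rfl
  obtain ⟨w, -, rfl⟩ := mem_image.mp hO
  rw [mem_compOf_iff_compOf_eq, eq_comm]

theorem prod_arcSign_mem_eq_ite (O : Finset V) :
    ∏ v ∈ univ.filter (fun v : {v : V // v ∉ U} => v.1 ∈ O), arcSign G c v
      = if NegComp G U c O ∨ IsBackstepComp c O then -1 else 1 := by
  by_cases hbs : IsBackstepComp c O
  · obtain ⟨v, rfl, hv⟩ := hbs
    have : univ.filter (fun w : {v : V // v ∉ U} => w.1 ∈ ({v.1} : Finset V)) = {v} := by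
      ext w
      simp [Subtype.ext_iff]
    rw [this, prod_singleton, if_pos (Or.inr ⟨v, rfl, hv⟩), arcSign, ← hv, Int.units_mul_self]
  · rw [if_congr (or_iff_left hbs) rfl rfl]
    split_ifs with hneg
    · exact hneg.2
    · exact (Int.units_eq_one_or _).resolve_right fun h => hneg ⟨hbs, h⟩

variable {G c}

omit [DecidableEq V] in
theorem compOf_eq_singleton_of_backstep (ht : ∀ v, G.vtx (c v).1 = v.1)
    (hinj : Function.Injective fun v => G.vtx (c v).2) {v : {v : V // v ∉ U}}
    (hv : (c v).1 = (c v).2) : compOf G U c v.1 = {v.1} := by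
  have hloop : G.vtx (c v).2 = v.1 := by rw [← hv, ht]
  have step (a b : V) (hab : arcRel G U c a b) : a = v.1 ↔ b = v.1 := by
    obtain ⟨w, rfl, rfl⟩ := hab
    rw [← Subtype.ext_iff, ← hloop]
    exact hinj.eq_iff.symm
  have closed (a b : V) (hab : Relation.EqvGen (arcRel G U c) a b) : a = v.1 ↔ b = v.1 := by
    induction hab with
    | rel x y hxy => exact step x y hxy
    | refl => rfl
    | symm _ _ _ ih => exact ih.symm
    | trans _ _ _ _ _ ih₁ ih₂ => exact ih₁.trans ih₂
  ext w
  simp only [compOf, mem_filter, mem_univ, true_and, mem_singleton]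
  exact ⟨fun h => (closed _ _ h).mp rfl, fun h => h ▸ Relation.EqvGen.refl _⟩

end Components

section Backsteps

omit [Fintype E] [DecidableEq E] [Fintype I]

variable {G : OHG V E I} {U : Finset V} {c : {v : V // v ∉ U} → I × I}

theorem card_filter_isBackstepComp_compsOf (ht : ∀ v, G.vtx (c v).1 = v.1)
    (hinj : Function.Injective fun v => G.vtx (c v).2) :
    ((compsOf G U c).filter (IsBackstepComp c)).card = bsR U c := by
  refine (card_bij (fun v _ => {v.1}) (fun v hv => ?_) (fun v _ w _ h => ?_) fun O hO => ?_).symm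
  · have hv := (mem_filter.mp hv).2
    refine mem_filter.mpr ⟨?_, v, rfl, hv⟩
    rw [← compOf_eq_singleton_of_backstep ht hinj hv]
    exact mem_image_of_mem _ (mem_univ _)
  · exact Subtype.ext (singleton_injective h)
  · obtain ⟨v, rfl, hv⟩ := (mem_filter.mp hO).2
    exact ⟨v, mem_filter.mpr ⟨mem_univ _, hv⟩, rfl⟩

theorem prod_arcSign_eq_neg_one_pow (ht : ∀ v, G.vtx (c v).1 = v.1)
    (hinj : Function.Injective fun v => G.vtx (c v).2) :
    ∏ v, arcSign G c v = (-1) ^ (ncR G U c + bsR U c) := by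
  have hdisj : Disjoint ((compsOf G U c).filter (NegComp G U c))
      ((compsOf G U c).filter (IsBackstepComp c)) :=
    disjoint_filter.mpr fun _ _ hneg => hneg.1
  rw [prod_eq_prod_compsOf G c, prod_congr rfl fun O _ => prod_arcSign_mem_eq_ite G c O,
    prod_ite, prod_const, prod_const, one_pow, mul_one, filter_or,
    card_union_of_disjoint hdisj, card_filter_isBackstepComp_compsOf ht hinj, ncR]

end Backsteps

def permsExtending (U : Finset V) (φ : {v : V // v ∈ U} ↪ V) : Finset (Perm V) :=
  univ.filter fun σ => (Function.Embedding.subtype (· ∈ U)).trans σ.toEmbedding = φ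

theorem mem_permsExtending {U : Finset V} {φ : {v : V // v ∈ U} ↪ V} {σ : Perm V} :
    σ ∈ permsExtending U φ ↔ ∀ u : {v : V // v ∈ U}, σ u = φ u := by
  simp [permsExtending, DFunLike.ext_iff]

open MvPolynomial in
theorem det_X_sub_C_eq_sum {R : Type*} [CommRing R] (M : Matrix V V R) :
    det (of (fun v w => X (v, w)) - M.map C)
      = ∑ U : Finset V, ∑ φ : {v : V // v ∈ U} ↪ V,
          C (∑ σ ∈ permsExtending U φ,
              (Perm.sign σ : R) * ∏ v : {v : V // v ∉ U}, -M v (σ v)) *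
            ∏ u : {v : V // v ∈ U}, X (u.1, φ u) := by
  have entry (σ : Perm V) (v : V) :
      (of (fun v w => X (v, w)) - M.map C)ᵀ (σ v) v = X (v, σ v) + C (-M v (σ v)) := by
    simp [sub_eq_add_neg]
  rw [← det_transpose, det_apply']
  simp_rw [entry, prod_add, powerset_univ, mul_sum]
  rw [sum_comm]
  refine sum_congr rfl fun U _ => ?_
  rw [← sum_fiberwise univ fun σ : Perm V =>
    (Function.Embedding.subtype (· ∈ U)).trans σ.toEmbedding]
  refine sum_congr rfl fun φ _ => ?_
  rw [← permsExtending, map_sum, sum_mul]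
  refine sum_congr rfl fun σ hσ => ?_
  rw [mem_permsExtending] at hσ
  rw [← prod_coe_sort U, prod_subtype (univ \ U) (p := (· ∉ U)) (by simp)]
  simp only [hσ, map_mul, map_prod, map_intCast]
  ring

section Completion

omit [Fintype E] [DecidableEq E] [Fintype I] [DecidableEq I]

variable {G : OHG V E I} {U : Finset V} {φ : {v : V // v ∈ U} ↪ V}
  {c : {v : V // v ∉ U} → I × I}

omit [Fintype V] in
theorem compFun_coe_of_mem (u : {v : V // v ∈ U}) : compFun G U φ c u = φ u :=
  dif_pos u.2

omit [Fintype V] in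
theorem compFun_coe_of_notMem (v : {v : V // v ∉ U}) : compFun G U φ c v = G.vtx (c v).2 :=
  dif_neg v.2

theorem bijective_compFun_iff :
    Function.Bijective (compFun G U φ c) ↔
      Set.BijOn (fun v : {v : V // v ∉ U} => G.vtx (c v).2) Set.univ
        {w | w ∉ Set.range φ} := by
  have onU := compFun_coe_of_mem (G := G) (φ := φ) (c := c)
  have offU := compFun_coe_of_notMem (G := G) (φ := φ) (c := c)
  constructor
  · intro hbij
    refine ⟨fun v _ ⟨u, hu⟩ => v.2 ?_, fun v _ w _ h => ?_, fun w hw => ?_⟩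
    · exact hbij.1 ((onU u).trans (hu.trans (offU v).symm)) ▸ u.2
    · exact Subtype.ext (hbij.1 ((offU v).trans (h.trans (offU w).symm)))
    · obtain ⟨x, rfl⟩ := hbij.2 w
      by_cases hx : x ∈ U
      · exact absurd ⟨⟨x, hx⟩, (onU ⟨x, hx⟩).symm⟩ hw
      · exact ⟨⟨x, hx⟩, Set.mem_univ _, (offU ⟨x, hx⟩).symm⟩
  · intro hc
    refine (Fintype.bijective_iff_injective_and_card _).mpr ⟨fun a b hab => ?_, rfl⟩
    by_cases ha : a ∈ U <;> by_cases hb : b ∈ U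
    · rw [onU ⟨a, ha⟩, onU ⟨b, hb⟩] at hab
      exact congrArg Subtype.val (φ.injective hab)
    · rw [onU ⟨a, ha⟩, offU ⟨b, hb⟩] at hab
      exact absurd ⟨_, hab⟩ (hc.mapsTo (Set.mem_univ ⟨b, hb⟩))
    · rw [offU ⟨a, ha⟩, onU ⟨b, hb⟩] at hab
      exact absurd ⟨_, hab.symm⟩ (hc.mapsTo (Set.mem_univ ⟨a, ha⟩))
    · rw [offU ⟨a, ha⟩, offU ⟨b, hb⟩] at hab
      exact congrArg Subtype.val (hc.injOn (Set.mem_univ _) (Set.mem_univ _) hab)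

end Completion

section Contributors

variable (G : OHG V E I) (U : Finset V) (φ : {v : V // v ∈ U} ↪ V)

omit [Fintype V] [DecidableEq I] in
theorem lapM_apply (v w : V) :
    lapM G v w = ∑ p ∈ univ.filter
        (fun p : I × I => G.vtx p.1 = v ∧ G.edg p.1 = G.edg p.2 ∧ G.vtx p.2 = w),
      (G.sgn p.1 * G.sgn p.2 : ℤ) := by
  rw [lapM, Matrix.mul_apply, sum_filter, Fintype.sum_prod_type]
  simp only [incM, Matrix.of_apply, Matrix.transpose_apply, sum_filter,
    sum_mul_sum, ite_mul, zero_mul, mul_ite, mul_zero]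
  rw [sum_comm]
  refine sum_congr rfl fun i _ => ?_
  rw [sum_comm]
  refine sum_congr rfl fun j _ => ?_
  by_cases h1 : G.vtx i = v <;> by_cases h2 : G.vtx j = w <;>
    by_cases h3 : G.edg i = G.edg j <;> simp [h1, h2, h3]

def pairChoices (σ : Perm V) : Finset ({v : V // v ∉ U} → I × I) :=
  Fintype.piFinset fun v => univ.filter
    fun p : I × I => G.vtx p.1 = v.1 ∧ G.edg p.1 = G.edg p.2 ∧ G.vtx p.2 = σ v.1

omit [DecidableEq I] in
theorem prod_neg_lapM_eq_sum_pairChoices (σ : Perm V) :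
    ∏ v : {v : V // v ∉ U}, -lapM G v (σ v)
      = ∑ p ∈ pairChoices G U σ, ((∏ v, arcSign G p v : ℤˣ) : ℤ) := by
  simp only [lapM_apply, ← sum_neg_distrib, pairChoices, arcSign, Units.coe_prod]
  push_cast
  exact prod_univ_sum _ _

omit [Fintype E] [DecidableEq I] in
theorem mem_permsExtending_and_mem_pairChoices_iff (σ : Perm V)
    (c : {v : V // v ∉ U} → I × I) :
    σ ∈ permsExtending U φ ∧ c ∈ pairChoices G U σ ↔
      ⇑σ = compFun G U φ c ∧ IsRedCont G U φ c := by
  simp only [mem_permsExtending, pairChoices, Fintype.mem_piFinset, mem_filter, mem_univ,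
    true_and, IsRedCont, ← bijective_compFun_iff]
  constructor
  · rintro ⟨hφ, hc⟩
    have hσ : ⇑σ = compFun G U φ c := by
      funext v
      by_cases hv : v ∈ U
      · exact (hφ ⟨v, hv⟩).trans (compFun_coe_of_mem ⟨v, hv⟩).symm
      · exact (hc ⟨v, hv⟩).2.2.symm.trans (compFun_coe_of_notMem ⟨v, hv⟩).symm
    exact ⟨hσ, fun v => (hc v).1, fun v => (hc v).2.1, hσ ▸ σ.bijective⟩
  · rintro ⟨hσ, ht, he, -⟩
    refine ⟨fun u => ?_, fun v => ⟨ht v, he v, ?_⟩⟩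
    · rw [hσ, compFun_coe_of_mem]
    · rw [hσ, compFun_coe_of_notMem]

omit [Fintype E] [DecidableEq E] [Fintype I] in
theorem sign_mul_prod_arcSign_eq_csgnR {c : {v : V // v ∉ U} → I × I}
    (hc : IsRedCont G U φ c) {σ : Perm V} (hσ : ⇑σ = compFun G U φ c) :
    (Perm.sign σ : ℤ) * ((∏ v, arcSign G c v : ℤˣ) : ℤ) = csgnR G U φ c := by
  have hinj : Function.Injective fun v => G.vtx (c v).2 := Set.injOn_univ.mp hc.2.2.injOn
  rw [sign_eq_neg_one_pow_card_even_orbitsOf, hσ, prod_arcSign_eq_neg_one_pow hc.1 hinj,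
    ← Units.val_mul, ← pow_add, csgnR, ecR, add_assoc]
  push_cast
  rfl

theorem sum_permsExtending_eq_sum_csgnR :
    ∑ σ ∈ permsExtending U φ,
        (Perm.sign σ : ℤ) * ∏ v : {v : V // v ∉ U}, -lapM G v (σ v)
      = ∑ c ∈ univ.filter (IsRedCont G U φ), csgnR G U φ c := by
  simp_rw [prod_neg_lapM_eq_sum_pairChoices, mul_sum]
  rw [sum_comm' (t' := univ.filter (IsRedCont G U φ))
    (s' := fun c => univ.filter fun σ : Perm V => ⇑σ = compFun G U φ c)
    (fun σ c => by simpa using mem_permsExtending_and_mem_pairChoices_iff G U φ σ c)]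
  refine sum_congr rfl fun c hc => ?_
  have hc := (mem_filter.mp hc).2
  obtain ⟨σ, hσ⟩ : ∃ σ : Perm V, ⇑σ = compFun G U φ c :=
    ⟨Equiv.ofBijective _ (bijective_compFun_iff.mpr hc.2.2), rfl⟩
  simp only [← hσ, DFunLike.coe_fn_eq, filter_eq', mem_univ, if_true, sum_singleton]
  exact sign_mul_prod_arcSign_eq_csgnR G U φ hc hσ

end Contributors

/-- **Total-minor Polynomial.** For an oriented hypergraph `G` with
Laplacian `L = H Hᵀ` and matrix of indeterminates `X = (x_{v,w})`,
`det (X - L) = Σ_{(U,φ)} (Σ_c csgn c) Π_{u ∈ U} x_{u, φ u}`, where `(U, φ)` ranges over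
all subsets `U ⊆ V` with an injection `φ : U → V`, and `c` ranges over all nonzero
reduced `[u,w]`-contributors of `G` for `φ`. -/
theorem total_minor_polynomial (G : OHG V E I) :
    Matrix.det
        ((Matrix.of fun v w : V => (MvPolynomial.X (v, w) : MvPolynomial (V × V) ℤ)) -
          (lapM G).map fun n : ℤ => (n : MvPolynomial (V × V) ℤ))
      = ∑ U : Finset V, ∑ φ : {v : V // v ∈ U} ↪ V,
          MvPolynomial.C
              (∑ c ∈ Finset.univ.filter
                  (fun c : {v : V // v ∉ U} → I × I => IsRedCont G U φ c),
                csgnR G U φ c) *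
            ∏ u : {v : V // v ∈ U}, MvPolynomial.X (u.1, φ u) := by
  have hcast : (fun n : ℤ => (n : MvPolynomial (V × V) ℤ)) = MvPolynomial.C :=
    funext fun n => (eq_intCast MvPolynomial.C n).symm
  simp only [hcast, det_X_sub_C_eq_sum, Int.cast_id, sum_permsExtending_eq_sum_csgnR]
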